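/- arXiv:2407.13031 — 3 statements merged into one kernel-verified Lean document; each statement's English description precedes it below -/
import Mathlib

section
/- Let R be a commutative ring, M₁ and M₂ modules over R, and Q₁, Q₂ quadratic forms on M₁ and M₂ respectively. Then there exists an R-algebra isomorphism e from the graded tensor product CliffordAlgebra Q₁ ᵍ⊗[R] CliffordAlgebra Q₂ (with respect to the even–odd gradings) to CliffordAlgebra (Q₁.prod Q₂) such that e((ι v) ⊗ 1) = ι (v, 0) and e(1 ⊗ (ι w)) = ι (0, w) for all v ∈ M₁ and w ∈ M₂; moreover e carries (evenOdd Q₁ i) ⊗ (evenOdd Q₂ j) into evenOdd (Q₁.prod Q₂) (i + j) for all i, j ∈ ℤ/2. -/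
open scoped TensorProduct

open CliffordAlgebra in
lemma aux_map_mem_evenOdd {R M₁ M₂ : Type*} [CommRing R] [AddCommGroup M₁] [AddCommGroup M₂]
    [Module R M₁] [Module R M₂] {Q₁ : QuadraticForm R M₁} {Q₂ : QuadraticForm R M₂}
    (f : Q₁ →qᵢ Q₂) {i : ZMod 2} {x : CliffordAlgebra Q₁} (hx : x ∈ evenOdd Q₁ i) :
    CliffordAlgebra.map f x ∈ evenOdd Q₂ i := by
  have : Submodule.map (CliffordAlgebra.map f).toLinearMap (evenOdd Q₁ i) ≤ evenOdd Q₂ i := by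
    rw [evenOdd, Submodule.map_iSup]
    refine iSup_le fun j => ?_
    rw [Submodule.map_pow]
    refine le_trans ?_ (le_iSup _ j)
    gcongr
    rintro _ ⟨_, ⟨m, rfl⟩, rfl⟩
    exact ⟨f m, (CliffordAlgebra.map_apply_ι f m).symm⟩
  exact this ⟨x, hx, rfl⟩

/-- For quadratic forms `Q₁`, `Q₂` over a commutative ring `R`, there is an
`R`-algebra isomorphism from the graded tensor product of the Clifford algebras (with respect to
their even–odd gradings) to the Clifford algebra of the product form, sending `ι v ⊗ 1` to
`ι (v, 0)` and `1 ⊗ ι w` to `ι (0, w)`, and carrying `(evenOdd Q₁ i) ⊗ (evenOdd Q₂ j)` into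
`evenOdd (Q₁.prod Q₂) (i + j)`. -/
theorem graded_tensor_clifford_equiv_clifford_prod
    {R M₁ M₂ : Type*} [CommRing R] [AddCommGroup M₁] [AddCommGroup M₂]
    [Module R M₁] [Module R M₂]
    (Q₁ : QuadraticForm R M₁) (Q₂ : QuadraticForm R M₂) :
    ∃ e : (CliffordAlgebra.evenOdd Q₁ ᵍ⊗[R] CliffordAlgebra.evenOdd Q₂) ≃ₐ[R]
        CliffordAlgebra (Q₁.prod Q₂),
      (∀ v : M₁, e (CliffordAlgebra.ι Q₁ v ᵍ⊗ₜ[R] (1 : CliffordAlgebra Q₂)) =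
          CliffordAlgebra.ι (Q₁.prod Q₂) (v, 0)) ∧
      (∀ w : M₂, e ((1 : CliffordAlgebra Q₁) ᵍ⊗ₜ[R] CliffordAlgebra.ι Q₂ w) =
          CliffordAlgebra.ι (Q₁.prod Q₂) (0, w)) ∧
      (∀ (i j : ZMod 2) (x : CliffordAlgebra Q₁) (y : CliffordAlgebra Q₂),
        x ∈ CliffordAlgebra.evenOdd Q₁ i → y ∈ CliffordAlgebra.evenOdd Q₂ j →
          e (x ᵍ⊗ₜ[R] y) ∈ CliffordAlgebra.evenOdd (Q₁.prod Q₂) (i + j)) := by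
  have key : ∀ z, (CliffordAlgebra.prodEquiv Q₁ Q₂).symm z = CliffordAlgebra.toProd Q₁ Q₂ z :=
    fun z => rfl
  refine ⟨(CliffordAlgebra.prodEquiv Q₁ Q₂).symm, fun v => ?_, fun w => ?_, fun i j x y hx hy => ?_⟩
  · rw [key]
    exact CliffordAlgebra.toProd_ι_tmul_one Q₁ Q₂ v
  · rw [key]
    exact CliffordAlgebra.toProd_one_tmul_ι Q₁ Q₂ w
  · rw [key, CliffordAlgebra.toProd, GradedTensorProduct.lift_tmul]
    exact SetLike.mul_mem_graded (aux_map_mem_evenOdd _ hx) (aux_map_mem_evenOdd _ hy)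
end

section
/- Let Q be a quadratic form on a module M over a commutative ring R, and let e : CliffordAlgebra Q ᵍ⊗[R] CliffordAlgebra Q ≃ CliffordAlgebra (Q.prod Q) be an R-algebra isomorphism satisfying e((ι v) ⊗ 1) = ι (v, 0) and e(1 ⊗ (ι w)) = ι (0, w). Let τ be the isometry equivalence of Q.prod Q given by the swap (v, w) ↦ (w, v). Then for all i, j ∈ ℤ/2 and all homogeneous x ∈ evenOdd Q i and y ∈ evenOdd Q j, CliffordAlgebra.map τ (e (x ⊗ y)) = (−1)^{i·j} • e (y ⊗ x), where the exponent i·j ∈ {0,1} is the product of the representatives of i and j. -/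
open scoped TensorProduct

/-!
An algebra map out of `evenOdd Q₁ ᵍ⊗ evenOdd Q₂` is determined by its values on `ι v ⊗ 1` and
`1 ⊗ ι w`, so `e` is Mathlib's `CliffordAlgebra.toProd`. For the same reason the swap isometry
intertwines `toProd Q₁ Q₂` with `toProd Q₂ Q₁` composed with the graded braiding, and the braiding
of homogeneous elements is exactly the Koszul sign.
-/

lemma neg_one_uzpow_mul_smul {R A : Type*} [CommRing R] [AddCommGroup A] [Module R A]
    (i j : ZMod 2) (z : A) :
    (-1 : ℤˣ) ^ (j * i) • z = (-1 : R) ^ (i.val * j.val) • z := by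
  change (-1 : ℤˣ) ^ (j * i).val • z = _
  rw [Units.smul_def, ← Int.cast_smul_eq_zsmul R, ZMod.val_mul, mul_comm j.val,
    neg_one_pow_eq_pow_mod_two (R := R) (i.val * j.val)]
  push_cast
  rfl

namespace CliffordAlgebra

variable {R M₁ M₂ : Type*} [CommRing R] [AddCommGroup M₁] [AddCommGroup M₂]
  [Module R M₁] [Module R M₂] (Q₁ : QuadraticForm R M₁) (Q₂ : QuadraticForm R M₂)

lemma eq_toProd_of_ι {f : evenOdd Q₁ ᵍ⊗[R] evenOdd Q₂ →ₐ[R] CliffordAlgebra (Q₁.prod Q₂)}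
    (h₁ : ∀ v, f (ι Q₁ v ᵍ⊗ₜ[R] (1 : CliffordAlgebra Q₂)) = ι _ (v, 0))
    (h₂ : ∀ w, f ((1 : CliffordAlgebra Q₁) ᵍ⊗ₜ[R] ι Q₂ w) = ι _ (0, w)) :
    f = toProd Q₁ Q₂ := by
  ext <;> simp [h₁, h₂]

lemma map_prodComm_comp_toProd :
    (map (QuadraticMap.IsometryEquiv.prodComm Q₁ Q₂).toIsometry).comp (toProd Q₁ Q₂) =
      (toProd Q₂ Q₁).comp (GradedTensorProduct.comm (evenOdd Q₁) (evenOdd Q₂)).toAlgHom := by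
  ext v
  · have hcomm := GradedTensorProduct.comm_coe_tmul_coe (evenOdd Q₁) (evenOdd Q₂)
      ⟨ι Q₁ v, ι_mem_evenOdd_one Q₁ v⟩ ⟨1, SetLike.GradedOne.one_mem⟩
    simp [hcomm]
  · have hcomm := GradedTensorProduct.comm_coe_tmul_coe (evenOdd Q₁) (evenOdd Q₂)
      ⟨1, SetLike.GradedOne.one_mem⟩ ⟨ι Q₂ v, ι_mem_evenOdd_one Q₂ v⟩
    simp [hcomm]

lemma map_prodComm_toProd_tmul {i j : ZMod 2} {x : CliffordAlgebra Q₁} {y : CliffordAlgebra Q₂}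
    (hx : x ∈ evenOdd Q₁ i) (hy : y ∈ evenOdd Q₂ j) :
    map (QuadraticMap.IsometryEquiv.prodComm Q₁ Q₂).toIsometry (toProd Q₁ Q₂ (x ᵍ⊗ₜ[R] y)) =
      (-1 : R) ^ (i.val * j.val) • toProd Q₂ Q₁ (y ᵍ⊗ₜ[R] x) := by
  have hcomm : GradedTensorProduct.comm (evenOdd Q₁) (evenOdd Q₂) (x ᵍ⊗ₜ[R] y) =
      (-1 : ℤˣ) ^ (j * i) • (y ᵍ⊗ₜ[R] x) :=
    GradedTensorProduct.comm_coe_tmul_coe (evenOdd Q₁) (evenOdd Q₂) ⟨x, hx⟩ ⟨y, hy⟩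
  rw [← AlgHom.comp_apply, map_prodComm_comp_toProd, AlgHom.comp_apply, AlgEquiv.toAlgHom_apply,
    hcomm, neg_one_uzpow_mul_smul (R := R), map_smul]

end CliffordAlgebra

/-- For `e : CliffordAlgebra Q ᵍ⊗[R] CliffordAlgebra Q ≃ CliffordAlgebra (Q.prod Q)`
satisfying the generator conditions, and `τ` the swap isometry `(v, w) ↦ (w, v)` of `Q.prod Q`,
for homogeneous `x ∈ evenOdd Q i`, `y ∈ evenOdd Q j` one has
`map τ (e (x ⊗ y)) = (−1)^(i·j) • e (y ⊗ x)`. -/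
theorem clifford_prod_equiv_swap_koszul
    {R M : Type*} [CommRing R] [AddCommGroup M] [Module R M]
    (Q : QuadraticForm R M)
    (e : (CliffordAlgebra.evenOdd Q ᵍ⊗[R] CliffordAlgebra.evenOdd Q) ≃ₐ[R]
        CliffordAlgebra (Q.prod Q))
    (he₁ : ∀ v : M, e (CliffordAlgebra.ι Q v ᵍ⊗ₜ[R] (1 : CliffordAlgebra Q)) =
        CliffordAlgebra.ι (Q.prod Q) (v, 0))
    (he₂ : ∀ w : M, e ((1 : CliffordAlgebra Q) ᵍ⊗ₜ[R] CliffordAlgebra.ι Q w) =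
        CliffordAlgebra.ι (Q.prod Q) (0, w)) :
    ∀ (i j : ZMod 2) (x y : CliffordAlgebra Q),
      x ∈ CliffordAlgebra.evenOdd Q i → y ∈ CliffordAlgebra.evenOdd Q j →
        CliffordAlgebra.map (QuadraticMap.IsometryEquiv.prodComm Q Q).toIsometry
            (e (x ᵍ⊗ₜ[R] y)) =
          ((-1 : R) ^ (i.val * j.val)) • e (y ᵍ⊗ₜ[R] x) := by
  intro i j x y hx hy
  have he : ∀ z, e z = CliffordAlgebra.toProd Q Q z :=
    DFunLike.congr_fun (CliffordAlgebra.eq_toProd_of_ι Q Q (f := e.toAlgHom) he₁ he₂)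
  rw [he, he]
  exact CliffordAlgebra.map_prodComm_toProd_tmul Q Q hx hy
end

section
/- Fix p, q ∈ ℕ and set n = p + q. Then: (a) there exists a map σ : ℂl_n → ℂl_n that is ℝ-linear, multiplicative with σ 1 = 1, conjugate-linear over ℂ (σ (c • x) = (conj c) • σ x for all c ∈ ℂ), involutive (σ ∘ σ = id), and satisfies σ (ι e_j) = ι e_j for j < p and σ (ι e_j) = −ι e_j for p ≤ j < n, where (e_j) is the standard basis of Fin n → ℂ; (b) there is an injective ℝ-algebra homomorphism Ψ : Cl_{p,q} → ℂl_n (viewing ℂl_n as an ℝ-algebra by restriction of scalars) with Ψ (ι f_j) = ι e_j for j < p and Ψ (ι f_j) = Complex.I • ι e_j for p ≤ j < n, where (f_j) is the standard basis of Fin n → ℝ; and (c) the range of Ψ is exactly the set of fixed points {x ∈ ℂl_n | σ x = x}. -/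
/-!
Put `√ε_j = 1` for `j < p` and `√ε_j = i` for `p ≤ j`. Since `(√ε_j)² = ε_j` is the `j`-th weight
of `Q_{p,q}`, the map `c ⊗ v ↦ (c √ε_j v_j)_j` is an isometry from the complexification of `Q_{p,q}`
onto `Q_nᶜ`, hence `ℂl_n ≅ ℂ ⊗_ℝ Cl_{p,q}` as `ℂ`-algebras, with `1 ⊗ ι f_j ↦ √ε_j • ι e_j`.
Transporting `conj ⊗ id` gives `σ` and transporting `b ↦ 1 ⊗ b` gives `Ψ`. The fixed points of
`conj ⊗ id` are exactly `1 ⊗ Cl_{p,q}`: on pure tensors `x + (conj ⊗ id) x = 2 Re c ⊗ b`, so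
`x + (conj ⊗ id) x ∈ 1 ⊗ Cl_{p,q}` for every `x`.
-/

/-- The real quadratic form `Q_{p,q}` on `Fin (p+q) → ℝ`, given by
`Q_{p,q}(x) = ∑_{j<p} x_j² − ∑_{p≤j<p+q} x_j²`. -/
noncomputable def Qpq (p q : ℕ) : QuadraticForm ℝ (Fin (p + q) → ℝ) :=
  QuadraticMap.weightedSumSquares ℝ
    (fun j : Fin (p + q) => if (j : ℕ) < p then (1 : ℝ) else -1)

/-- The complex quadratic form `Q_nᶜ` on `Fin n → ℂ`, given by `Q_nᶜ(z) = ∑_{j<n} z_j²`. -/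
noncomputable def Qc (n : ℕ) : QuadraticForm ℂ (Fin n → ℂ) :=
  QuadraticMap.weightedSumSquares ℂ (fun _ : Fin n => (1 : ℂ))

open scoped TensorProduct ComplexConjugate
open QuadraticMap

noncomputable section

namespace QuadraticForm

variable {ι R A : Type*} [Fintype ι] [DecidableEq ι] [CommRing R] [CommRing A] [Algebra R A]
  [Invertible (2 : R)]

def baseChangeWeightedSumSquares (w : ι → R) :
    (QuadraticForm.baseChange A (weightedSumSquares R w)).IsometryEquiv
      (weightedSumSquares A (algebraMap R A ∘ w)) where
  toLinearEquiv := TensorProduct.piScalarRight R A A ι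
  map_app' := by
    suffices (weightedSumSquares A (algebraMap R A ∘ w)).comp
        (TensorProduct.piScalarRight R A A ι).toLinearMap =
          QuadraticForm.baseChange A (weightedSumSquares R w) from
      fun x => congr($this x)
    ext m
    simp [baseChange_tmul, weightedSumSquares_apply, Algebra.smul_def, map_sum]

end QuadraticForm

section ConjTensor

variable {B : Type*} [Semiring B] [Algebra ℝ B]

def conjTensor : ℂ ⊗[ℝ] B ≃ₐ[ℝ] ℂ ⊗[ℝ] B :=
  Algebra.TensorProduct.congr Complex.conjAe AlgEquiv.refl

@[simp]
lemma conjTensor_tmul (c : ℂ) (b : B) : conjTensor (c ⊗ₜ[ℝ] b) = conj c ⊗ₜ[ℝ] b := rfl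

lemma conjTensor_conjTensor (x : ℂ ⊗[ℝ] B) : conjTensor (conjTensor x) = x := by
  induction x with
  | zero => simp
  | add x y hx hy => rw [map_add, map_add, hx, hy]
  | tmul c b => simp

lemma conjTensor_smul (c : ℂ) (x : ℂ ⊗[ℝ] B) : conjTensor (c • x) = conj c • conjTensor x := by
  induction x with
  | zero => simp
  | add x y hx hy => rw [smul_add, map_add, hx, hy, map_add, smul_add]
  | tmul a b => simp [TensorProduct.smul_tmul']

lemma add_conjTensor_mem_range (x : ℂ ⊗[ℝ] B) :
    x + conjTensor x ∈ (Algebra.TensorProduct.includeRight : B →ₐ[ℝ] ℂ ⊗[ℝ] B).range := by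
  induction x with
  | zero => simp
  | add x y hx hy =>
    rw [map_add, add_add_add_comm]
    exact add_mem hx hy
  | tmul c b =>
    refine ⟨(2 * c.re) • b, ?_⟩
    change (1 : ℂ) ⊗ₜ[ℝ] ((2 * c.re) • b) = _
    rw [conjTensor_tmul, ← TensorProduct.add_tmul, Complex.add_conj, ← TensorProduct.smul_tmul,
      Complex.real_smul, mul_one]

lemma range_includeRight_eq_fixedPoints :
    Set.range (Algebra.TensorProduct.includeRight : B →ₐ[ℝ] ℂ ⊗[ℝ] B) =
      Function.fixedPoints conjTensor := by
  ext x
  constructor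
  · rintro ⟨b, rfl⟩
    simp [Function.IsFixedPt, Algebra.TensorProduct.includeRight_apply]
  · intro hx
    have h := Subalgebra.smul_mem _ (add_conjTensor_mem_range x) (2⁻¹ : ℝ)
    rw [Function.mem_fixedPoints.mp hx, ← two_smul ℝ x, smul_smul, inv_mul_cancel₀ two_ne_zero,
      one_smul] at h
    exact h

end ConjTensor

section RealStructure

variable {B A : Type*} [Ring B] [Algebra ℝ B] [Ring A] [Algebra ℂ A] [Algebra ℝ A]
  [IsScalarTower ℝ ℂ A] (e : ℂ ⊗[ℝ] B ≃ₐ[ℂ] A)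

def realStructure : A ≃ₐ[ℝ] A :=
  (e.symm.restrictScalars ℝ).trans (conjTensor.trans (e.restrictScalars ℝ))

def realForm : B →ₐ[ℝ] A :=
  (e.toAlgHom.restrictScalars ℝ).comp Algebra.TensorProduct.includeRight

lemma realStructure_apply (x : A) : realStructure e x = e (conjTensor (e.symm x)) := rfl

lemma realForm_apply (b : B) : realForm e b = e (1 ⊗ₜ[ℝ] b) := rfl

lemma realStructure_smul (c : ℂ) (x : A) :
    realStructure e (c • x) = conj c • realStructure e x := by
  simp only [realStructure_apply, map_smul, conjTensor_smul]

lemma realStructure_realStructure (x : A) : realStructure e (realStructure e x) = x := by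
  simp only [realStructure_apply, AlgEquiv.symm_apply_apply, conjTensor_conjTensor,
    AlgEquiv.apply_symm_apply]

lemma realForm_injective : Function.Injective (realForm e) :=
  e.injective.comp (Algebra.TensorProduct.includeRight_injective Complex.ofReal_injective)

lemma realStructure_realForm (b : B) : realStructure e (realForm e b) = realForm e b := by
  simp [realStructure_apply, realForm_apply]

lemma range_realForm : Set.range (realForm e) = Function.fixedPoints (realStructure e) := by
  ext x
  constructor
  · rintro ⟨b, rfl⟩
    exact realStructure_realForm e b
  · intro hx
    obtain ⟨b, hb⟩ : e.symm x ∈ Set.range Algebra.TensorProduct.includeRight := by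
      rw [range_includeRight_eq_fixedPoints]
      exact e.eq_symm_apply.mpr (Function.mem_fixedPoints.mp hx)
    exact ⟨b, by rw [realForm_apply, ← Algebra.TensorProduct.includeRight_apply, hb,
      e.apply_symm_apply]⟩

lemma realStructure_eq_neg_of_fixed_I_smul (x : A)
    (hx : realStructure e (Complex.I • x) = Complex.I • x) : realStructure e x = -x := by
  rw [realStructure_smul, Complex.conj_I] at hx
  calc realStructure e x = Complex.I • -Complex.I • realStructure e x := by
        rw [smul_smul, mul_neg, Complex.I_mul_I, neg_neg, one_smul]
    _ = -x := by rw [hx, smul_smul, Complex.I_mul_I, neg_one_smul]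

end RealStructure

def sqrtSign (p q : ℕ) (j : Fin (p + q)) : ℂˣ :=
  if (j : ℕ) < p then 1 else Units.mk0 Complex.I Complex.I_ne_zero

lemma sqrtSign_of_lt {p q : ℕ} {j : Fin (p + q)} (hj : (j : ℕ) < p) :
    (sqrtSign p q j : ℂ) = 1 := by
  simp [sqrtSign, hj]

lemma sqrtSign_of_le {p q : ℕ} {j : Fin (p + q)} (hj : p ≤ (j : ℕ)) :
    (sqrtSign p q j : ℂ) = Complex.I := by
  simp [sqrtSign, not_lt.mpr hj]

def baseChangeQpqIsometryEquiv (p q : ℕ) :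
    (QuadraticForm.baseChange ℂ (Qpq p q)).IsometryEquiv (Qc (p + q)) :=
  (QuadraticForm.baseChangeWeightedSumSquares _).trans
    (QuadraticForm.isometryEquivWeightedSumSquaresWeightedSumSquares (sqrtSign p q) fun j => by
      by_cases hj : (j : ℕ) < p
      · simp [sqrtSign_of_lt hj, hj]
      · simp [sqrtSign_of_le (not_lt.mp hj), hj])

def cliffordEquiv (p q : ℕ) :
    ℂ ⊗[ℝ] CliffordAlgebra (Qpq p q) ≃ₐ[ℂ] CliffordAlgebra (Qc (p + q)) :=
  (CliffordAlgebra.equivBaseChange ℂ (Qpq p q)).symm.trans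
    (CliffordAlgebra.equivOfIsometry (baseChangeQpqIsometryEquiv p q))

lemma baseChangeQpqIsometryEquiv_one_tmul_single (p q : ℕ) (j : Fin (p + q)) :
    baseChangeQpqIsometryEquiv p q (1 ⊗ₜ[ℝ] Pi.single j 1) =
      Pi.single j (sqrtSign p q j : ℂ) := by
  ext i
  change (sqrtSign p q • fun k => (Pi.single j 1 : Fin (p + q) → ℝ) k • (1 : ℂ)) i = _
  rcases eq_or_ne i j with rfl | hij
  · simp [Units.smul_def]
  · simp [hij]

lemma realForm_cliffordEquiv_ι_single (p q : ℕ) (j : Fin (p + q)) :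
    realForm (cliffordEquiv p q) (CliffordAlgebra.ι (Qpq p q) (Pi.single j 1)) =
      (sqrtSign p q j : ℂ) • CliffordAlgebra.ι (Qc (p + q)) (Pi.single j 1) := by
  rw [realForm_apply, cliffordEquiv, AlgEquiv.trans_apply,
    CliffordAlgebra.equivBaseChange_symm_apply, CliffordAlgebra.ofBaseChange_tmul_ι,
    CliffordAlgebra.equivOfIsometry_apply, CliffordAlgebra.map_apply_ι, ← map_smul,
    ← Pi.single_smul', smul_eq_mul, mul_one]
  exact congrArg _ (baseChangeQpqIsometryEquiv_one_tmul_single p q j)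

end

/-- For `n = p + q`: (a) there is a Real structure `σ` on `ℂl_n`, i.e. an
ℝ-linear, multiplicative, unital, conjugate-linear involution fixing `ι e_j` for `j < p` and
negating `ι e_j` for `p ≤ j < n`; (b) there is an injective ℝ-algebra homomorphism
`Ψ : Cl_{p,q} → ℂl_n` with `Ψ (ι f_j) = ι e_j` for `j < p` and `Ψ (ι f_j) = I • ι e_j` for
`p ≤ j < n`; (c) the range of `Ψ` is exactly the set of `σ`-fixed points. -/
theorem real_structure_on_complex_clifford (p q : ℕ) :
    ∃ σ : CliffordAlgebra (Qc (p + q)) → CliffordAlgebra (Qc (p + q)),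
      (∀ x y, σ (x + y) = σ x + σ y) ∧
      (∀ (r : ℝ) (x), σ (r • x) = r • σ x) ∧
      (∀ x y, σ (x * y) = σ x * σ y) ∧
      σ 1 = 1 ∧
      (∀ (c : ℂ) (x), σ (c • x) = (starRingEnd ℂ) c • σ x) ∧
      (∀ x, σ (σ x) = x) ∧
      (∀ j : Fin (p + q), (j : ℕ) < p →
        σ (CliffordAlgebra.ι (Qc (p + q)) (Pi.single j (1 : ℂ))) =
          CliffordAlgebra.ι (Qc (p + q)) (Pi.single j (1 : ℂ))) ∧
      (∀ j : Fin (p + q), p ≤ (j : ℕ) →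
        σ (CliffordAlgebra.ι (Qc (p + q)) (Pi.single j (1 : ℂ))) =
          -CliffordAlgebra.ι (Qc (p + q)) (Pi.single j (1 : ℂ))) ∧
      ∃ Ψ : CliffordAlgebra (Qpq p q) →ₐ[ℝ] CliffordAlgebra (Qc (p + q)),
        Function.Injective Ψ ∧
        (∀ j : Fin (p + q), (j : ℕ) < p →
          Ψ (CliffordAlgebra.ι (Qpq p q) (Pi.single j (1 : ℝ))) =
            CliffordAlgebra.ι (Qc (p + q)) (Pi.single j (1 : ℂ))) ∧
        (∀ j : Fin (p + q), p ≤ (j : ℕ) →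
          Ψ (CliffordAlgebra.ι (Qpq p q) (Pi.single j (1 : ℝ))) =
            Complex.I • CliffordAlgebra.ι (Qc (p + q)) (Pi.single j (1 : ℂ))) ∧
        Set.range Ψ = {x | σ x = x} := by
  set e := cliffordEquiv p q
  have realForm_of_lt {j : Fin (p + q)} (hj : (j : ℕ) < p) :
      realForm e (CliffordAlgebra.ι (Qpq p q) (Pi.single j 1)) =
        CliffordAlgebra.ι (Qc (p + q)) (Pi.single j 1) := by
    rw [realForm_cliffordEquiv_ι_single, sqrtSign_of_lt hj, one_smul]
  have realForm_of_le {j : Fin (p + q)} (hj : p ≤ (j : ℕ)) :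
      realForm e (CliffordAlgebra.ι (Qpq p q) (Pi.single j 1)) =
        Complex.I • CliffordAlgebra.ι (Qc (p + q)) (Pi.single j 1) := by
    rw [realForm_cliffordEquiv_ι_single, sqrtSign_of_le hj]
  refine ⟨realStructure e, map_add _, map_smul _, map_mul _, map_one _, realStructure_smul e,
    realStructure_realStructure e, fun j hj => ?_, fun j hj => ?_, realForm e,
    realForm_injective e, fun j hj => realForm_of_lt hj, fun j hj => realForm_of_le hj,
    range_realForm e⟩
  · rw [← realForm_of_lt hj, realStructure_realForm]
  · refine realStructure_eq_neg_of_fixed_I_smul e _ ?_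
    rw [← realForm_of_le hj, realStructure_realForm]
end
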